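/- For the Routh sphere rolling under a constant vertical gravitational force, the Jellet integral H3 = (M, r), the geometric integral H4 = (γ, γ) and the Routh integral Ĥ2 = g(γ)·ω3 remain integrals of motion: X_𝗀(H3) = 0, X_𝗀(H4) = 0 and X_𝗀(Ĥ2) = 0 identically on the region where g(γ) > 0. -/

import Mathlib

noncomputable section

/-- Phase-space factor `ℝ³`. -/
abbrev V3 : Type := Fin 3 → ℝ

/-- Euclidean inner product `(u, v)` on `ℝ³`. -/
def dot3 (u v : V3) : ℝ := u 0 * v 0 + u 1 * v 1 + u 2 * v 2

/-- Cross product `u × v` on `ℝ³`. -/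
def cross3 (u v : V3) : V3 :=
  ![u 1 * v 2 - u 2 * v 1, u 2 * v 0 - u 0 * v 2, u 0 * v 1 - u 1 * v 0]

/-- The vector `r = (Rγ₁, Rγ₂, Rγ₃ + a)` joining the center of mass with the contact point. -/
def rvec (R a : ℝ) (γ : V3) : V3 := ![R * γ 0, R * γ 1, R * γ 2 + a]

/-- The tensor `I_Q = I + m (r,r) E − m r ⊗ r` with `I = diag (I1, I1, I3)`. -/
def IQ (m R I1 I3 a : ℝ) (γ : V3) : Matrix (Fin 3) (Fin 3) ℝ :=
  Matrix.diagonal ![I1, I1, I3]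
    + (m * dot3 (rvec R a γ) (rvec R a γ)) • (1 : Matrix (Fin 3) (Fin 3) ℝ)
    - m • Matrix.of (fun i j => rvec R a γ i * rvec R a γ j)

/-- The angular velocity `ω`, defined by `M = I_Q ω`. -/
def omega3 (m R I1 I3 a : ℝ) (γ M : V3) : V3 := ((IQ m R I1 I3 a γ)⁻¹).mulVec M

/-- The density `g(γ)` of the invariant measure. -/
def gR (m R I1 I3 a : ℝ) (γ : V3) : ℝ :=
  Real.sqrt (I1 * I3 + I1 * m * R ^ 2 * (dot3 γ γ - γ 2 ^ 2) + I3 * m * (R * γ 2 + a) ^ 2)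

/-- The Routh-sphere vector field: `γ' = γ × ω`, `M' = M × ω + m r' × (ω × r)`,
`r' = R (γ × ω)`. -/
def XR (m R I1 I3 a : ℝ) (p : V3 × V3) : V3 × V3 :=
  (cross3 p.1 (omega3 m R I1 I3 a p.1 p.2),
   cross3 p.2 (omega3 m R I1 I3 a p.1 p.2)
     + m • cross3 (R • cross3 p.1 (omega3 m R I1 I3 a p.1 p.2))
         (cross3 (omega3 m R I1 I3 a p.1 p.2) (rvec R a p.1)))

/-- `H₁ = (M, ω)`. -/
def H1R (m R I1 I3 a : ℝ) (p : V3 × V3) : ℝ := dot3 p.2 (omega3 m R I1 I3 a p.1 p.2)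

/-- `H₂ = (M, M) − m (r, r) H₁`. -/
def H2R (m R I1 I3 a : ℝ) (p : V3 × V3) : ℝ :=
  dot3 p.2 p.2 - m * dot3 (rvec R a p.1) (rvec R a p.1) * H1R m R I1 I3 a p

/-- The Jellet integral `H₃ = (M, r)`. -/
def H3R (R a : ℝ) (p : V3 × V3) : ℝ := dot3 p.2 (rvec R a p.1)

/-- `H₄ = (γ, γ)`. -/
def H4R (p : V3 × V3) : ℝ := dot3 p.1 p.1

/-- The Routh integral `Ĥ₂ = g(γ) ω₃`. -/
def Hhat2R (m R I1 I3 a : ℝ) (p : V3 × V3) : ℝ :=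
  gR m R I1 I3 a p.1 * omega3 m R I1 I3 a p.1 p.2 2

/-- The gravitational potential `U = −m 𝗀 (r, γ)`. -/
def Upot (m R a gr : ℝ) (γ : V3) : ℝ := -(m * gr * dot3 (rvec R a γ) γ)

/-- The gradient `∂U/∂γ` of the potential with respect to `γ`. -/
def gradU (m R a gr : ℝ) (γ : V3) : V3 :=
  fun i => fderiv ℝ (Upot m R a gr) γ (Pi.single i 1)

/-- The Routh-sphere vector field in a constant vertical gravity field:
`γ' = γ × ω`, `M' = M × ω + m r' × (ω × r) + γ × ∂U/∂γ`. -/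
def Xg (m R I1 I3 a gr : ℝ) (p : V3 × V3) : V3 × V3 :=
  (cross3 p.1 (omega3 m R I1 I3 a p.1 p.2),
   cross3 p.2 (omega3 m R I1 I3 a p.1 p.2)
     + m • cross3 (R • cross3 p.1 (omega3 m R I1 I3 a p.1 p.2))
         (cross3 (omega3 m R I1 I3 a p.1 p.2) (rvec R a p.1))
     + cross3 p.1 (gradU m R a gr p.1))

/-! Write `X_𝗀 = X_R + (0, τ)`, where `X_R` is the free Routh sphere and
`τ = γ × ∂U/∂γ = m𝗀a (e₃ × γ)`. The vector `τ` is orthogonal to the plane `⟨γ, e₃⟩`, which contains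
`r = Rγ + a e₃` and is invariant under the symmetric `I_Q`, hence also contains `I_Q⁻¹ e₃`. So the
differentials of `H₃`, `H₄` and `Ĥ₂` kill `(0, τ)`, and it remains to see that they are integrals
of `X_R`.

For `Ĥ₂` the point is that `K := g² I_Q⁻¹ e₃` is polynomial in `γ`, so `g² ω₃ = (K, M)`. Near a
point where `I_Q` is invertible and `g > 0` this gives `Ĥ₂ = (K, M) / g`, and the derivative of
`Ĥ₂` along `X_R` vanishes by a polynomial identity in `γ` and `ω` once `M = I_Q ω` is
substituted. -/

open Topology Matrix

section RouthSphere

variable (m R I1 I3 a : ℝ)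

def gSq (γ : V3) : ℝ :=
  I1 * I3 + I1 * m * R ^ 2 * (dot3 γ γ - γ 2 ^ 2) + I3 * m * (R * γ 2 + a) ^ 2

/-- `K = g(γ)² I_Q(γ)⁻¹ e₃`, see `dot3_routhCovector_IQ_mulVec`. -/
def routhCovector (γ : V3) : V3 :=
  ![m * (R * γ 2 + a) * (R * γ 0), m * (R * γ 2 + a) * (R * γ 1), I1 + m * (R * γ 2 + a) ^ 2]

lemma IQ_mulVec (γ w : V3) :
    IQ m R I1 I3 a γ *ᵥ w =
      ![I1 * w 0, I1 * w 1, I3 * w 2] + (m * dot3 (rvec R a γ) (rvec R a γ)) • w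
        - (m * dot3 (rvec R a γ) w) • rvec R a γ := by
  ext i
  fin_cases i <;>
    simp [IQ, mulVec, dotProduct, Fin.sum_univ_three, dot3, vecHead, vecTail] <;> ring

lemma dot3_routhCovector_IQ_mulVec (γ w : V3) :
    dot3 (routhCovector m R I1 a γ) (IQ m R I1 I3 a γ *ᵥ w) = gSq m R I1 I3 a γ * w 2 := by
  simp only [IQ_mulVec, routhCovector, gSq, dot3, rvec, cons_val, Pi.add_apply, Pi.sub_apply,
    Pi.smul_apply, smul_eq_mul]
  ring

variable {m R I1 I3 a}

lemma IQ_mulVec_omega3 {γ : V3} (hreg : IsUnit (IQ m R I1 I3 a γ).det) (M : V3) :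
    IQ m R I1 I3 a γ *ᵥ omega3 m R I1 I3 a γ M = M := by
  rw [omega3, mulVec_mulVec, mul_nonsing_inv _ hreg, one_mulVec]

lemma gSq_mul_omega3_two {γ : V3} (hreg : IsUnit (IQ m R I1 I3 a γ).det) (M : V3) :
    gSq m R I1 I3 a γ * omega3 m R I1 I3 a γ M 2 = dot3 (routhCovector m R I1 a γ) M := by
  rw [← dot3_routhCovector_IQ_mulVec, IQ_mulVec_omega3 hreg]

lemma gR_sq {γ : V3} (hg : 0 < gR m R I1 I3 a γ) : gR m R I1 I3 a γ ^ 2 = gSq m R I1 I3 a γ :=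
  Real.sq_sqrt (Real.sqrt_pos.mp hg).le

lemma Hhat2R_eventuallyEq {p : V3 × V3} (hreg : IsUnit (IQ m R I1 I3 a p.1).det)
    (hg : 0 < gR m R I1 I3 a p.1) :
    Hhat2R m R I1 I3 a =ᶠ[𝓝 p]
      fun q => dot3 (routhCovector m R I1 a q.1) q.2 * (gR m R I1 I3 a q.1)⁻¹ := by
  have hdet : Continuous fun q : V3 × V3 => (IQ m R I1 I3 a q.1).det := by
    unfold IQ dot3 rvec; fun_prop
  have hgR : Continuous fun q : V3 × V3 => gR m R I1 I3 a q.1 := by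
    unfold gR dot3; fun_prop
  filter_upwards [hdet.continuousAt.eventually_ne hreg.ne_zero,
    continuousAt_const.eventually_lt hgR.continuousAt hg] with q hq hgq
  rw [Hhat2R, ← gSq_mul_omega3_two (isUnit_iff_ne_zero.mpr hq), ← gR_sq hgq]
  field_simp

lemma fderiv_gSq_apply (γ δ : V3) :
    fderiv ℝ (gSq m R I1 I3 a) γ δ =
      2 * m * R * (I1 * R * (γ 0 * δ 0 + γ 1 * δ 1) + I3 * (R * γ 2 + a) * δ 2) := by
  unfold gSq dot3
  simp (disch := fun_prop) [fderiv_fun_add, fderiv_fun_mul, fderiv_fun_sub, fderiv_fun_pow,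
    fderiv_apply]
  ring

lemma fderiv_dot3_routhCovector_apply (p v : V3 × V3) :
    fderiv ℝ (fun q : V3 × V3 => dot3 (routhCovector m R I1 a q.1) q.2) p v =
      dot3 (routhCovector m R I1 a p.1) v.2 + m * R * (R * v.1 2 * (p.1 0 * p.2 0 + p.1 1 * p.2 1)
        + (R * p.1 2 + a) * (v.1 0 * p.2 0 + v.1 1 * p.2 1 + 2 * v.1 2 * p.2 2)) := by
  unfold routhCovector dot3
  simp (disch := fun_prop) [fderiv_fun_add, fderiv_fun_mul, fderiv_fun_pow, fderiv_apply,
    fderiv_fst, fderiv_snd]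
  ring

lemma fderiv_Hhat2R_apply {p : V3 × V3} (hreg : IsUnit (IQ m R I1 I3 a p.1).det)
    (hg : 0 < gR m R I1 I3 a p.1) (v : V3 × V3) :
    fderiv ℝ (Hhat2R m R I1 I3 a) p v =
      (fderiv ℝ (fun q : V3 × V3 => dot3 (routhCovector m R I1 a q.1) q.2) p v
        - omega3 m R I1 I3 a p.1 p.2 2 / 2 * fderiv ℝ (gSq m R I1 I3 a) p.1 v.1)
        / gR m R I1 I3 a p.1 := by
  have hN : DifferentiableAt ℝ (fun q : V3 × V3 => dot3 (routhCovector m R I1 a q.1) q.2) p := by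
    simp only [routhCovector, dot3, cons_val]; fun_prop
  have hQ : DifferentiableAt ℝ (gSq m R I1 I3 a) p.1 := by unfold gSq dot3; fun_prop
  have hQ0 : gSq m R I1 I3 a p.1 ≠ 0 := by rw [← gR_sq hg]; positivity
  have hginv : HasFDerivAt (fun q : V3 × V3 => (gR m R I1 I3 a q.1)⁻¹) _ p :=
    (hasFDerivAt_inv hg.ne').comp p ((hQ.hasFDerivAt.comp p hasFDerivAt_fst).sqrt hQ0)
  have hsqrt : √(gSq m R I1 I3 a p.1) = gR m R I1 I3 a p.1 := rfl
  rw [(Hhat2R_eventuallyEq hreg hg).fderiv_eq, (hN.hasFDerivAt.fun_mul hginv).fderiv]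
  simp only [_root_.add_apply, _root_.smul_apply, ContinuousLinearMap.comp_apply,
    ContinuousLinearMap.toSpanSingleton_apply, ContinuousLinearMap.coe_fst', Function.comp_apply,
    smul_eq_mul, hsqrt]
  rw [← gSq_mul_omega3_two hreg, ← gR_sq hg]
  field_simp
  ring

lemma fderiv_H3R_apply (p v : V3 × V3) :
    fderiv ℝ (H3R R a) p v = dot3 v.2 (rvec R a p.1) + R * dot3 p.2 v.1 := by
  unfold H3R rvec dot3
  simp (disch := fun_prop) [fderiv_fun_add, fderiv_fun_mul, fderiv_apply, fderiv_fst, fderiv_snd]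
  ring

lemma fderiv_H4R_apply (p v : V3 × V3) : fderiv ℝ H4R p v = 2 * dot3 p.1 v.1 := by
  unfold H4R dot3
  simp (disch := fun_prop) [fderiv_fun_add, fderiv_fun_mul, fderiv_apply, fderiv_fst]
  ring

lemma fderiv_H4R_XR (p : V3 × V3) : fderiv ℝ H4R p (XR m R I1 I3 a p) = 0 := by
  rw [fderiv_H4R_apply]
  simp only [XR, dot3, cross3, cons_val]
  ring

lemma fderiv_H3R_XR {p : V3 × V3} (hreg : IsUnit (IQ m R I1 I3 a p.1).det) :
    fderiv ℝ (H3R R a) p (XR m R I1 I3 a p) = 0 := by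
  obtain ⟨γ, M⟩ := p
  have hM := IQ_mulVec_omega3 hreg M
  rw [fderiv_H3R_apply]
  simp only [XR]
  generalize omega3 m R I1 I3 a γ M = ω at hM ⊢
  rw [← hM]
  simp only [IQ_mulVec, dot3, cross3, rvec, cons_val, Pi.add_apply, Pi.sub_apply, Pi.smul_apply,
    smul_eq_mul]
  ring

lemma fderiv_Hhat2R_XR {p : V3 × V3} (hreg : IsUnit (IQ m R I1 I3 a p.1).det)
    (hg : 0 < gR m R I1 I3 a p.1) :
    fderiv ℝ (Hhat2R m R I1 I3 a) p (XR m R I1 I3 a p) = 0 := by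
  obtain ⟨γ, M⟩ := p
  have hM := IQ_mulVec_omega3 hreg M
  rw [fderiv_Hhat2R_apply hreg hg, fderiv_dot3_routhCovector_apply, fderiv_gSq_apply,
    div_eq_zero_iff]
  left
  simp only [XR]
  generalize omega3 m R I1 I3 a γ M = ω at hM ⊢
  rw [← hM]
  simp only [IQ_mulVec, dot3, cross3, rvec, routhCovector, cons_val, Pi.add_apply, Pi.sub_apply,
    Pi.smul_apply, smul_eq_mul]
  ring

lemma fderiv_Upot_apply (gr : ℝ) (γ δ : V3) :
    fderiv ℝ (Upot m R a gr) γ δ = -(m * gr * (2 * R * dot3 γ δ + a * δ 2)) := by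
  unfold Upot rvec dot3
  simp (disch := fun_prop) [fderiv_fun_add, fderiv_fun_mul, fderiv_apply]
  ring

lemma cross3_gradU (gr : ℝ) (γ : V3) :
    cross3 γ (gradU m R a gr γ) = (m * gr * a) • ![-γ 1, γ 0, 0] := by
  ext i
  fin_cases i <;> simp [cross3, gradU, fderiv_Upot_apply, dot3] <;> ring

lemma Xg_eq_XR_add (gr : ℝ) (p : V3 × V3) :
    Xg m R I1 I3 a gr p = XR m R I1 I3 a p + (0, cross3 p.1 (gradU m R a gr p.1)) := by
  simp [Xg, XR]

lemma fderiv_H4R_gravity (gr : ℝ) (p : V3 × V3) :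
    fderiv ℝ H4R p (0, cross3 p.1 (gradU m R a gr p.1)) = 0 := by
  simp [fderiv_H4R_apply, dot3]

lemma fderiv_H3R_gravity (gr : ℝ) (p : V3 × V3) :
    fderiv ℝ (H3R R a) p (0, cross3 p.1 (gradU m R a gr p.1)) = 0 := by
  rw [fderiv_H3R_apply, cross3_gradU]
  simp only [dot3, rvec, cons_val, Pi.zero_apply, Pi.smul_apply, smul_eq_mul]
  ring

lemma fderiv_Hhat2R_gravity (gr : ℝ) {p : V3 × V3} (hreg : IsUnit (IQ m R I1 I3 a p.1).det)
    (hg : 0 < gR m R I1 I3 a p.1) :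
    fderiv ℝ (Hhat2R m R I1 I3 a) p (0, cross3 p.1 (gradU m R a gr p.1)) = 0 := by
  rw [fderiv_Hhat2R_apply hreg hg, fderiv_dot3_routhCovector_apply, cross3_gradU, map_zero]
  simp only [dot3, routhCovector, cons_val, Pi.zero_apply, Pi.smul_apply, smul_eq_mul]
  ring

end RouthSphere

theorem routh_gravity_linear_integrals_general (m R I1 I3 a gr : ℝ)
    (p : V3 × V3) (hreg : IsUnit (IQ m R I1 I3 a p.1).det)
    (hg : 0 < gR m R I1 I3 a p.1) :
    fderiv ℝ (H3R R a) p (Xg m R I1 I3 a gr p) = 0 ∧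
    fderiv ℝ H4R p (Xg m R I1 I3 a gr p) = 0 ∧
    fderiv ℝ (Hhat2R m R I1 I3 a) p (Xg m R I1 I3 a gr p) = 0 := by
  simp only [Xg_eq_XR_add, map_add, fderiv_H3R_XR hreg, fderiv_H4R_XR, fderiv_Hhat2R_XR hreg hg,
    fderiv_H3R_gravity, fderiv_H4R_gravity, fderiv_Hhat2R_gravity gr hreg hg, add_zero, and_self]

/-- For the Routh sphere in a constant vertical gravity field, the Jellet
integral `H₃ = (M, r)`, the geometric integral `H₄ = (γ, γ)` and the Routh integral
`Ĥ₂ = g(γ) ω₃` remain integrals of motion: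
`X_𝗀(H₃) = 0`, `X_𝗀(H₄) = 0` and `X_𝗀(Ĥ₂) = 0` on the region where `g(γ) > 0`. -/
theorem routh_gravity_linear_integrals (m R I1 I3 a gr : ℝ) (hm : 0 < m) (hR : 0 < R) (hI1 : 0 < I1) (hI3 : 0 < I3)
    (hgr : 0 ≤ gr)
    (p : V3 × V3) (hreg : IsUnit (IQ m R I1 I3 a p.1).det)
    (hg : 0 < gR m R I1 I3 a p.1) :
    fderiv ℝ (H3R R a) p (Xg m R I1 I3 a gr p) = 0 ∧
    fderiv ℝ H4R p (Xg m R I1 I3 a gr p) = 0 ∧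
    fderiv ℝ (Hhat2R m R I1 I3 a) p (Xg m R I1 I3 a gr p) = 0 :=
  routh_gravity_linear_integrals_general m R I1 I3 a gr p hreg hg
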